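/- Let P = (D_A, D_B, Φ, A) be an MBSD instance and let 𝒜 be the arena with U = V = S × T, u0 = (s0, t0), α = {((s,t),(s',t)) : (s,s') ∈ δ^A}, β = {((s,t),(s,t')) : (t,t') ∈ δ^B}. For every P2 strategy σ' on 𝒜 there exists an executable strategy σ'' for P (defined by σ''(s0) = t0 and, for a play ρ ending in V-node (s', t) reached after A extends its trace by s', σ''(τ ∘ s'') equal to the T-component of σ'(ρ ∘ (s'', t))) such that: a sequence ρ is a play of 𝒜 compatible with σ' if and only if there exists a trace τ^A = s0 s1 ... sn of D_A such that, writing σ''~(τ^A) = t0 t1 ... tn, ρ = (s0,t0)(s1,t0)(s1,t1)(s2,t1)...(sn,t_{n-1})(sn,tn). -/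

import Mathlib

/-! ### Boolean formulas -/

inductive BForm (P : Type) : Type
  | tt : BForm P
  | atom : P → BForm P
  | neg : BForm P → BForm P
  | conj : BForm P → BForm P → BForm P

namespace BForm

/-- Satisfaction of a Boolean formula by the set `X` of true propositions. -/
def sat {P : Type} (X : Set P) : BForm P → Prop
  | .tt => True
  | .atom p => p ∈ X
  | .neg φ => ¬ sat X φ
  | .conj φ ψ => sat X φ ∧ sat X ψ

def imp {P : Type} (φ ψ : BForm P) : BForm P := .neg (.conj φ (.neg ψ))

def map {P Q : Type} (f : P → Q) : BForm P → BForm Q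
  | .tt => .tt
  | .atom p => .atom (f p)
  | .neg φ => .neg (map f φ)
  | .conj φ ψ => .conj (map f φ) (map f ψ)

end BForm

/-! ### LTLf formulas and finite-word semantics -/

inductive LTLf (P : Type) : Type
  | tt : LTLf P
  | atom : P → LTLf P
  | neg : LTLf P → LTLf P
  | conj : LTLf P → LTLf P → LTLf P
  | next : LTLf P → LTLf P
  | untl : LTLf P → LTLf P → LTLf P

namespace LTLf

/-- Satisfaction on the finite word `π 0, …, π n` at position `i`. -/
def sat {P : Type} (π : ℕ → Set P) (n : ℕ) : ℕ → LTLf P → Prop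
  | _, .tt => True
  | i, .atom p => p ∈ π i
  | i, .neg φ => ¬ sat π n i φ
  | i, .conj φ ψ => sat π n i φ ∧ sat π n i ψ
  | i, .next φ => i + 1 ≤ n ∧ sat π n (i + 1) φ
  | i, .untl φ ψ => ∃ j, i ≤ j ∧ j ≤ n ∧ sat π n j ψ ∧ ∀ m, i ≤ m → m < j → sat π n m φ

def disj {P : Type} (φ ψ : LTLf P) : LTLf P := .neg (.conj (.neg φ) (.neg ψ))
def imp {P : Type} (φ ψ : LTLf P) : LTLf P := disj (.neg φ) ψ
def ev {P : Type} (φ : LTLf P) : LTLf P := .untl .tt φ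
def always {P : Type} (φ : LTLf P) : LTLf P := .neg (ev (.neg φ))
/-- Finite conjunction `⋀_{i=1}^k f i`. -/
def iconj {P : Type} {k : ℕ} (f : Fin k → LTLf P) : LTLf P :=
  ((List.finRange k).map f).foldr .conj .tt

end LTLf

def BForm.toLTLf {P : Type} : BForm P → LTLf P
  | .tt => .tt
  | .atom p => .atom p
  | .neg φ => .neg φ.toLTLf
  | .conj φ ψ => .conj φ.toLTLf ψ.toLTLf

/-! ### Dynamic domains, traces, strategies, solutions -/

structure DynDom (P S : Type) where
  init : S
  δ : S → S → Prop
  label : S → Set P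

/-- `τ 0 … τ n` is a (finite) trace of `D`. -/
def IsTrace {P S : Type} (D : DynDom P S) (τ : ℕ → S) (n : ℕ) : Prop :=
  τ 0 = D.init ∧ ∀ i, i < n → D.δ (τ i) (τ (i + 1))

def IsInfTrace {P S : Type} (D : DynDom P S) (τ : ℕ → S) : Prop :=
  τ 0 = D.init ∧ ∀ i, D.δ (τ i) (τ (i + 1))

/-- The prefix `τ 0 … τ j` as a list. -/
def pref {S : Type} (τ : ℕ → S) (j : ℕ) : List S := (List.range (j + 1)).map τ

/-- The trace induced by a strategy `σ : S⁺ → T` on a trace of the `A`-domain. -/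
def induced {S T : Type} (σ : List S → T) (τ : ℕ → S) : ℕ → T := fun i => σ (pref τ i)

def Executable {PA PB S T : Type} (DA : DynDom PA S) (DB : DynDom PB T)
    (σ : List S → T) : Prop :=
  σ [DA.init] = DB.init ∧ ∀ τ n, IsTrace DA τ n → IsTrace DB (induced σ τ) n

/-- Joint label of a pair of label sets, over the disjoint union of the propositions. -/
def jset {PA PB : Type} (XA : Set PA) (XB : Set PB) : Set (PA ⊕ PB) :=
  Sum.inl '' XA ∪ Sum.inr '' XB

/-- Joint trace label of two (equally long) traces. -/
def jointLabel {PA PB S T : Type} (lA : S → Set PA) (lB : T → Set PB)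
    (τ : ℕ → S) (τ' : ℕ → T) : ℕ → Set (PA ⊕ PB) :=
  fun i => jset (lA (τ i)) (lB (τ' i))

/-- Solution when the stop agent is `A`. -/
def IsSolutionA {PA PB S T : Type} (DA : DynDom PA S) (DB : DynDom PB T)
    (Φ : LTLf (PA ⊕ PB)) (σ : List S → T) : Prop :=
  Executable DA DB σ ∧ ∀ τ n, IsTrace DA τ n →
    LTLf.sat (jointLabel DA.label DB.label τ (induced σ τ)) n 0 Φ

/-- Solution when the stop agent is `B`. -/
def IsSolutionB {PA PB S T : Type} (DA : DynDom PA S) (DB : DynDom PB T)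
    (Φ : LTLf (PA ⊕ PB)) (σ : List S → T) : Prop :=
  Executable DA DB σ ∧ ∀ τ, IsInfTrace DA τ → ∃ n,
    LTLf.sat (jointLabel DA.label DB.label τ (induced σ τ)) n 0 Φ

/-! ### Two-player games -/

structure Arena (N : Type) where
  u0 : N
  alpha : N → N → Prop
  beta : N → N → Prop

def IsPrePlay {N : Type} (A : Arena N) (ρ : ℕ → N) (n : ℕ) : Prop :=
  ρ 0 = A.u0 ∧ ∀ i, i < n →
    (Even i → A.alpha (ρ i) (ρ (i + 1))) ∧ (¬ Even i → A.beta (ρ i) (ρ (i + 1)))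

/-- A play `ρ 0 … ρ n` (with `n` even, ending in a `P1` node). -/
def IsPlay {N : Type} (A : Arena N) (ρ : ℕ → N) (n : ℕ) : Prop :=
  Even n ∧ IsPrePlay A ρ n

/-- The `P2` (V-) nodes of the prefix `ρ 0 … ρ i`, i.e. `ρ 1, ρ 3, …`. -/
def vlist {N : Type} (ρ : ℕ → N) (i : ℕ) : List N :=
  (List.range ((i + 1) / 2)).map fun j => ρ (2 * j + 1)

def Compatible {N : Type} (A : Arena N) (σ' : List N → N) (ρ : ℕ → N) (n : ℕ) : Prop :=
  ∀ i, i < n → ¬ Even i → ρ (i + 1) = σ' (vlist ρ i)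

/-- A `P2` strategy only prescribes legal moves (along plays compatible with it). -/
def StratLegal {N : Type} (A : Arena N) (σ' : List N → N) : Prop :=
  ∀ ρ n, ¬ Even n → IsPrePlay A ρ n → Compatible A σ' ρ n →
    A.beta (ρ n) (σ' (vlist ρ n))

def IsInfPlay {N : Type} (A : Arena N) (ρ : ℕ → N) : Prop :=
  ρ 0 = A.u0 ∧ ∀ i,
    (Even i → A.alpha (ρ i) (ρ (i + 1))) ∧ (¬ Even i → A.beta (ρ i) (ρ (i + 1)))

def CompatibleInf {N : Type} (A : Arena N) (σ' : List N → N) (ρ : ℕ → N) : Prop :=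
  ∀ i, ¬ Even i → ρ (i + 1) = σ' (vlist ρ i)

/-- Winning strategy for the safety objective `Safe(g)`. -/
def WinningSafe {N : Type} (A : Arena N) (g : Set N) (σ' : List N → N) : Prop :=
  StratLegal A σ' ∧ ∀ ρ n, IsPlay A ρ n → Compatible A σ' ρ n →
    ∀ j, j ≤ n → Even j → ρ j ∈ g

/-- Winning strategy for the reachability objective `Reach(g)`:
no matter how `P1` keeps moving, a goal node is eventually reached. -/
def WinningReach {N : Type} (A : Arena N) (g : Set N) (σ' : List N → N) : Prop :=
  StratLegal A σ' ∧ ∀ ρ, IsInfPlay A ρ → CompatibleInf A σ' ρ →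
    ∃ j, Even j ∧ ρ j ∈ g

/-! ### The product arena of the two domains -/

def prodArena {PA PB S T : Type} (DA : DynDom PA S) (DB : DynDom PB T) :
    Arena (S × T) where
  u0 := (DA.init, DB.init)
  alpha := fun u v => DA.δ u.1 v.1 ∧ v.2 = u.2
  beta := fun v u => u.1 = v.1 ∧ DB.δ v.2 u.2

/-! ### Mapping specifications -/

/-- Point-wise mapping specification `⋀_{i} □(φ_i → ψ_i)`. -/
def pointwiseSpec {PA PB : Type} {k : ℕ} (φ : Fin k → BForm PA) (ψ : Fin k → BForm PB) :
    LTLf (PA ⊕ PB) :=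
  LTLf.iconj fun i =>
    LTLf.always (LTLf.imp ((φ i).map Sum.inl).toLTLf ((ψ i).map Sum.inr).toLTLf)

/-- Target mapping specification `⋀_{i} (◇φ_i → ◇ψ_i)`. -/
def targetSpec {PA PB : Type} {k : ℕ} (φ : Fin k → BForm PA) (ψ : Fin k → BForm PB) :
    LTLf (PA ⊕ PB) :=
  LTLf.iconj fun i =>
    LTLf.imp (LTLf.ev ((φ i).map Sum.inl).toLTLf) (LTLf.ev ((ψ i).map Sum.inr).toLTLf)

/-! ### The memory-augmented arena for target mappings -/

def memArena {PA PB S T : Type} {k : ℕ} (DA : DynDom PA S) (DB : DynDom PB T)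
    (φ : Fin k → BForm PA) (ψ : Fin k → BForm PB) :
    Arena (S × T × (Fin k → Prop × Prop)) where
  u0 := (DA.init, DB.init,
    fun i => ((φ i).sat (DA.label DA.init), (ψ i).sat (DB.label DB.init)))
  alpha := fun u v => DA.δ u.1 v.1 ∧ v.2.1 = u.2.1 ∧
    v.2.2 = fun i => ((φ i).sat (DA.label v.1) ∨ (u.2.2 i).1, (u.2.2 i).2)
  beta := fun v u => u.1 = v.1 ∧ DB.δ v.2.1 u.2.1 ∧
    u.2.2 = fun i => ((v.2.2 i).1, (ψ i).sat (DB.label u.2.1) ∨ (v.2.2 i).2)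

/-- `g`: for every `i`, `c_i = 0` or `d_i = 1`. -/
def memGoal {S T : Type} {k : ℕ} : Set (S × T × (Fin k → Prop × Prop)) :=
  {u | ∀ i, (u.2.2 i).1 → (u.2.2 i).2}

/-! ### The DFA-product arena for general LTLf mappings -/

/-- The word `π 0 … π n` as a list. -/
def wordOf {P : Type} (π : ℕ → Set P) (n : ℕ) : List (Set P) := (List.range (n + 1)).map π

def dfaArena {PA PB S T Q : Type} (DA : DynDom PA S) (DB : DynDom PB T)
    (F : DFA (Set (PA ⊕ PB)) Q) : Arena (S × T × Q) where
  u0 := (DA.init, DB.init, F.step F.start (jset (DA.label DA.init) (DB.label DB.init)))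
  alpha := fun u v => DA.δ u.1 v.1 ∧ v.2.1 = u.2.1 ∧ v.2.2 = u.2.2
  beta := fun v u => u.1 = v.1 ∧ DB.δ v.2.1 u.2.1 ∧
    u.2.2 = F.step v.2.2 (jset (DA.label v.1) (DB.label u.2.1))

def dfaGoal {S T α Q : Type} (F : DFA α Q) : Set (S × T × Q) :=
  {u | u.2.2 ∈ F.accept}

/-
A `P2` strategy `σ'` is turned into a strategy for `B` by replaying the game: along a trace
`s₀ s₁ …` of `D_A`, `B`'s next state `t_{j+1}` is the `T`-component of `σ'` applied to the
`V`-nodes `(s₁, t₀) … (s_{j+1}, t_j)` seen so far. Plays of the product arena are exactly the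
interleavings `(s₀,t₀)(s₁,t₀)(s₁,t₁)…` of a trace of each domain, and compatibility with `σ'` says
that the `D_B`-trace is the replayed one. Legality of `σ'` is what makes the replayed sequence a
trace of `D_B`: it forces `σ'` to keep `A`'s state and to answer along `δ^B`.
-/

section Arena

variable {N : Type} {A : Arena N} {σ' : List N → N}

theorem isPrePlay_succ {ρ : ℕ → N} {n : ℕ} :
    IsPrePlay A ρ (n + 1) ↔ IsPrePlay A ρ n ∧
      (Even n → A.alpha (ρ n) (ρ (n + 1))) ∧ (¬ Even n → A.beta (ρ n) (ρ (n + 1))) := by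
  constructor
  · rintro ⟨h0, hstep⟩
    exact ⟨⟨h0, fun i hi => hstep i (by omega)⟩, hstep n (by omega)⟩
  · rintro ⟨⟨h0, hstep⟩, hlast⟩
    refine ⟨h0, fun i hi => ?_⟩
    rcases Nat.lt_succ_iff_lt_or_eq.mp hi with hi | rfl
    exacts [hstep i hi, hlast]

theorem isPrePlay_two_mul_succ {ρ : ℕ → N} {m : ℕ} :
    IsPrePlay A ρ (2 * (m + 1)) ↔ IsPrePlay A ρ (2 * m) ∧
      A.alpha (ρ (2 * m)) (ρ (2 * m + 1)) ∧ A.beta (ρ (2 * m + 1)) (ρ (2 * m + 2)) := by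
  have hodd : ¬ Even (2 * m + 1) := by simp
  rw [show 2 * (m + 1) = 2 * m + 1 + 1 by ring, isPrePlay_succ, isPrePlay_succ]
  simp [hodd, and_assoc]

theorem compatible_succ {ρ : ℕ → N} {n : ℕ} :
    Compatible A σ' ρ (n + 1) ↔
      Compatible A σ' ρ n ∧ (¬ Even n → ρ (n + 1) = σ' (vlist ρ n)) := by
  constructor
  · intro h
    exact ⟨fun i hi => h i (by omega), h n (by omega)⟩
  · rintro ⟨h, hlast⟩ i hi
    rcases Nat.lt_succ_iff_lt_or_eq.mp hi with hi | rfl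
    exacts [h i hi, hlast]

theorem compatible_two_mul_succ {ρ : ℕ → N} {m : ℕ} :
    Compatible A σ' ρ (2 * (m + 1)) ↔
      Compatible A σ' ρ (2 * m) ∧ ρ (2 * m + 2) = σ' (vlist ρ (2 * m + 1)) := by
  have hodd : ¬ Even (2 * m + 1) := by simp
  rw [show 2 * (m + 1) = 2 * m + 1 + 1 by ring, compatible_succ, compatible_succ]
  simp [hodd]

theorem vlist_congr {ρ ρ' : ℕ → N} {i : ℕ} (h : ∀ k ≤ i, ρ k = ρ' k) :
    vlist ρ i = vlist ρ' i :=
  List.map_congr_left fun k hk => h _ (by rw [List.mem_range] at hk; omega)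

theorem IsPrePlay.congr {ρ ρ' : ℕ → N} {n : ℕ} (hp : IsPrePlay A ρ' n)
    (h : ∀ i ≤ n, ρ i = ρ' i) : IsPrePlay A ρ n := by
  refine ⟨(h 0 (Nat.zero_le n)).trans hp.1, fun i hi => ?_⟩
  rw [h i hi.le, h (i + 1) hi]
  exact hp.2 i hi

theorem Compatible.congr {ρ ρ' : ℕ → N} {n : ℕ} (hc : Compatible A σ' ρ' n)
    (h : ∀ i ≤ n, ρ i = ρ' i) : Compatible A σ' ρ n := by
  intro i hi hodd
  rw [h (i + 1) hi, vlist_congr fun k hk => h k (by omega)]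
  exact hc i hi hodd

end Arena

theorem isTrace_succ {P S : Type} {D : DynDom P S} {τ : ℕ → S} {m : ℕ} :
    IsTrace D τ (m + 1) ↔ IsTrace D τ m ∧ D.δ (τ m) (τ (m + 1)) := by
  constructor
  · rintro ⟨h0, hstep⟩
    exact ⟨⟨h0, fun i hi => hstep i (by omega)⟩, hstep m (by omega)⟩
  · rintro ⟨⟨h0, hstep⟩, hlast⟩
    refine ⟨h0, fun i hi => ?_⟩
    rcases Nat.lt_succ_iff_lt_or_eq.mp hi with hi | rfl
    exacts [hstep i hi, hlast]

section Interleave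

variable {S T : Type}

/-- The sequence `(τ 0, τ' 0) (τ 1, τ' 0) (τ 1, τ' 1) (τ 2, τ' 1) …`. -/
def interleave (τ : ℕ → S) (τ' : ℕ → T) (i : ℕ) : S × T :=
  (τ ((i + 1) / 2), τ' (i / 2))

@[simp]
theorem interleave_two_mul (τ : ℕ → S) (τ' : ℕ → T) (j : ℕ) :
    interleave τ τ' (2 * j) = (τ j, τ' j) := by
  simp only [interleave]; congr 2 <;> omega

@[simp]
theorem interleave_two_mul_add_one (τ : ℕ → S) (τ' : ℕ → T) (j : ℕ) :
    interleave τ τ' (2 * j + 1) = (τ (j + 1), τ' j) := by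
  simp only [interleave]; congr 2 <;> omega

theorem forall_le_two_mul_eq_interleave {ρ : ℕ → S × T} {τ : ℕ → S} {τ' : ℕ → T} {m : ℕ}
    (heven : ∀ j ≤ m, ρ (2 * j) = (τ j, τ' j))
    (hodd : ∀ j < m, ρ (2 * j + 1) = (τ (j + 1), τ' j)) :
    ∀ i ≤ 2 * m, ρ i = interleave τ τ' i := by
  intro i hi
  obtain ⟨j, rfl | rfl⟩ := Nat.even_or_odd' i
  · rw [interleave_two_mul, heven j (by omega)]
  · rw [interleave_two_mul_add_one, hodd j (by omega)]

def vHistory (τ : ℕ → S) (τ' : ℕ → T) (j : ℕ) : List (S × T) :=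
  (List.range j).map fun k => (τ (k + 1), τ' k)

theorem vlist_interleave (τ : ℕ → S) (τ' : ℕ → T) (j : ℕ) :
    vlist (interleave τ τ') (2 * j + 1) = vHistory τ τ' (j + 1) := by
  simp only [vlist, vHistory, interleave_two_mul_add_one]
  congr 2
  omega

theorem vHistory_succ (τ : ℕ → S) (τ' : ℕ → T) (j : ℕ) :
    vHistory τ τ' (j + 1) = vHistory τ τ' j ++ [(τ (j + 1), τ' j)] := by
  simp [vHistory, List.range_succ]

theorem vHistory_congr (τ : ℕ → S) {τ' τ'' : ℕ → T} {j : ℕ} (h : ∀ k < j, τ' k = τ'' k) :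
    vHistory τ τ' j = vHistory τ τ'' j :=
  List.map_congr_left fun k hk => by rw [h k (List.mem_range.mp hk)]

theorem compatible_interleave_iff {A : Arena (S × T)} {σ' : List (S × T) → S × T}
    {τ : ℕ → S} {τ' : ℕ → T} {m : ℕ} :
    Compatible A σ' (interleave τ τ') (2 * m) ↔
      ∀ j < m, (τ (j + 1), τ' (j + 1)) = σ' (vHistory τ τ' (j + 1)) := by
  induction m with
  | zero => exact ⟨fun _ j hj => absurd hj (Nat.not_lt_zero j), fun _ i hi => absurd hi (by omega)⟩
  | succ m ih =>
    rw [compatible_two_mul_succ, ih, show 2 * m + 2 = 2 * (m + 1) by ring, interleave_two_mul,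
      vlist_interleave, Nat.forall_lt_succ_right]

variable {PA PB : Type} {DA : DynDom PA S} {DB : DynDom PB T}

theorem isPrePlay_prodArena_interleave_iff {τ : ℕ → S} {τ' : ℕ → T} {m : ℕ} :
    IsPrePlay (prodArena DA DB) (interleave τ τ') (2 * m) ↔
      IsTrace DA τ m ∧ IsTrace DB τ' m := by
  induction m with
  | zero =>
    simp [IsPrePlay, IsTrace, prodArena, interleave]
  | succ m ih =>
    rw [isPrePlay_two_mul_succ, ih, isTrace_succ, isTrace_succ,
      show 2 * m + 2 = 2 * (m + 1) by ring]
    simp only [interleave_two_mul, interleave_two_mul_add_one, prodArena, and_true, true_and]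
    tauto

theorem IsPrePlay.eq_interleave {ρ : ℕ → S × T} {m : ℕ}
    (hρ : IsPrePlay (prodArena DA DB) ρ (2 * m)) :
    ∀ i ≤ 2 * m, ρ i = interleave (fun j => (ρ (2 * j)).1) (fun j => (ρ (2 * j)).2) i := by
  refine forall_le_two_mul_eq_interleave (fun j _ => rfl) fun j hj => ?_
  have hα := (hρ.2 (2 * j) (by omega)).1 (even_two_mul j)
  have hβ := (hρ.2 (2 * j + 1) (by omega)).2 (by simp)
  exact Prod.ext (by rw [show 2 * (j + 1) = 2 * j + 1 + 1 by ring]; exact hβ.1.symm) hα.2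

end Interleave

section Replay

variable {S T : Type}

/-- One round of the game: `A` moves to `s`, then `P2` answers. The state is `B`'s current state
together with the `V`-nodes seen so far. -/
def replyStep (σ' : List (S × T) → S × T) (state : T × List (S × T)) (s : S) :
    T × List (S × T) :=
  ((σ' (state.2 ++ [(s, state.1)])).2, state.2 ++ [(s, state.1)])

/-- The head of `l` is the initial state, not a move of `A`, hence `l.tail`. -/
def domainStrategy (σ' : List (S × T) → S × T) (t₀ : T) (l : List S) : T :=
  (l.tail.foldl (replyStep σ') (t₀, [])).1

theorem foldl_tail_pref_succ {α : Type} (f : α → S → α) (a : α) (τ : ℕ → S) (j : ℕ) :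
    (pref τ (j + 1)).tail.foldl f a = f ((pref τ j).tail.foldl f a) (τ (j + 1)) := by
  have hne : pref τ j ≠ [] := by simp [pref]
  rw [show pref τ (j + 1) = pref τ j ++ [τ (j + 1)] by simp [pref, List.range_succ],
    List.tail_append_of_ne_nil hne, List.foldl_concat]

theorem foldl_replyStep_pref_snd (σ' : List (S × T) → S × T) (t₀ : T) (τ : ℕ → S) (j : ℕ) :
    ((pref τ j).tail.foldl (replyStep σ') (t₀, [])).2 =
      vHistory τ (induced (domainStrategy σ' t₀) τ) j := by
  induction j with
  | zero => rfl
  | succ j ih =>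
    rw [foldl_tail_pref_succ, replyStep, ih, vHistory_succ]
    rfl

theorem induced_domainStrategy_succ (σ' : List (S × T) → S × T) (t₀ : T) (τ : ℕ → S) (j : ℕ) :
    induced (domainStrategy σ' t₀) τ (j + 1) =
      (σ' (vHistory τ (induced (domainStrategy σ' t₀) τ) (j + 1))).2 := by
  rw [induced, domainStrategy, foldl_tail_pref_succ, replyStep, foldl_replyStep_pref_snd,
    vHistory_succ]
  rfl

theorem eq_induced_domainStrategy {σ' : List (S × T) → S × T} {t₀ : T} {τ : ℕ → S}
    {τ' : ℕ → T} {m : ℕ} (h0 : τ' 0 = t₀)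
    (hreply : ∀ j < m, τ' (j + 1) = (σ' (vHistory τ τ' (j + 1))).2) :
    ∀ j ≤ m, τ' j = induced (domainStrategy σ' t₀) τ j := by
  intro j
  induction j using Nat.strong_induction_on with
  | _ j ih =>
    rcases j with _ | j
    · exact fun _ => h0
    · intro hj
      rw [hreply j (by omega), induced_domainStrategy_succ,
        vHistory_congr τ fun k hk => ih k hk (by omega)]

variable {PA PB : Type} {DA : DynDom PA S} {DB : DynDom PB T}

theorem StratLegal.isTrace_and_compatible_induced {σ' : List (S × T) → S × T}
    (hσ' : StratLegal (prodArena DA DB) σ') {τ : ℕ → S} {m : ℕ} (hτ : IsTrace DA τ m) :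
    let τ' := induced (domainStrategy σ' DB.init) τ
    IsTrace DB τ' m ∧ Compatible (prodArena DA DB) σ' (interleave τ τ') (2 * m) := by
  intro τ'
  induction m with
  | zero => exact ⟨⟨rfl, fun _ h => absurd h (Nat.not_lt_zero _)⟩, fun _ h => absurd h (by omega)⟩
  | succ m ih =>
    obtain ⟨hτm, hδ⟩ := isTrace_succ.mp hτ
    obtain ⟨hτ'm, hc⟩ := ih hτm
    have hpre : IsPrePlay (prodArena DA DB) (interleave τ τ') (2 * m + 1) :=
      isPrePlay_succ.mpr ⟨isPrePlay_prodArena_interleave_iff.mpr ⟨hτm, hτ'm⟩,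
        fun _ => by simpa [prodArena] using hδ, fun h => absurd (even_two_mul m) h⟩
    have hβ := hσ' _ _ (by simp) hpre
      (compatible_succ.mpr ⟨hc, fun h => absurd (even_two_mul m) h⟩)
    rw [vlist_interleave, interleave_two_mul_add_one] at hβ
    have hanswer : σ' (vHistory τ τ' (m + 1)) = (τ (m + 1), τ' (m + 1)) :=
      Prod.ext hβ.1 (induced_domainStrategy_succ σ' DB.init τ m).symm
    rw [hanswer] at hβ
    refine ⟨isTrace_succ.mpr ⟨hτ'm, hβ.2⟩, compatible_two_mul_succ.mpr ⟨hc, ?_⟩⟩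
    rw [vlist_interleave, hanswer, show 2 * m + 2 = 2 * (m + 1) by ring, interleave_two_mul]

end Replay

theorem game_strategy_to_executable_strategy_general
    {PA PB S T : Type}
    (DA : DynDom PA S) (DB : DynDom PB T)
    (σ' : List (S × T) → S × T) (hσ' : StratLegal (prodArena DA DB) σ') :
    ∃ σ'' : List S → T, Executable DA DB σ'' ∧
      ∀ (ρ : ℕ → S × T) (n : ℕ),
        (IsPlay (prodArena DA DB) ρ n ∧ Compatible (prodArena DA DB) σ' ρ n) ↔
        (∃ (τ : ℕ → S) (m : ℕ), n = 2 * m ∧ IsTrace DA τ m ∧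
          (∀ j, j ≤ m → ρ (2 * j) = (τ j, induced σ'' τ j)) ∧
          (∀ j, j < m → ρ (2 * j + 1) = (τ (j + 1), induced σ'' τ j))) := by
  refine ⟨domainStrategy σ' DB.init,
    ⟨rfl, fun τ m hτ => (hσ'.isTrace_and_compatible_induced hτ).1⟩, fun ρ n => ⟨?_, ?_⟩⟩
  · rintro ⟨⟨⟨m, rfl⟩, hpre⟩, hcomp⟩
    rw [← two_mul] at hpre hcomp
    have hρ := hpre.eq_interleave
    obtain ⟨hτ, hτ'⟩ :=
      isPrePlay_prodArena_interleave_iff.mp (hpre.congr fun i hi => (hρ i hi).symm)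
    have hreply := compatible_interleave_iff.mp (hcomp.congr fun i hi => (hρ i hi).symm)
    have hinduced := eq_induced_domainStrategy (τ' := fun j => (ρ (2 * j)).2) hτ'.1
      fun j hj => congrArg Prod.snd (hreply j hj)
    refine ⟨_, m, (two_mul m).symm, hτ, fun j hj => ?_, fun j hj => ?_⟩
    · rw [hρ _ (by omega), interleave_two_mul, hinduced j hj]
    · rw [hρ _ (by omega), interleave_two_mul_add_one, hinduced j hj.le]
  · rintro ⟨τ, m, rfl, hτ, heven, hodd⟩
    have hρ := forall_le_two_mul_eq_interleave heven hodd
    obtain ⟨hτ', hc⟩ := hσ'.isTrace_and_compatible_induced hτ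
    exact ⟨⟨even_two_mul m, (isPrePlay_prodArena_interleave_iff.mpr ⟨hτ, hτ'⟩).congr hρ⟩,
      hc.congr hρ⟩

/-- from a `P2` strategy `σ'` on the product arena one obtains an
executable strategy `σ''` for the MBSD instance such that the plays compatible with `σ'`
are exactly the sequences `(s_0,t_0)(s_1,t_0)(s_1,t_1)…(s_n,t_{n-1})(s_n,t_n)` arising from
traces `τ^A = s_0…s_n` of `D_A` together with the induced traces `σ''~(τ^A) = t_0…t_n`. -/
theorem game_strategy_to_executable_strategy
    {PA PB S T : Type} [Fintype PA] [Fintype PB] [Fintype S] [Fintype T]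
    (DA : DynDom PA S) (DB : DynDom PB T)
    (σ' : List (S × T) → S × T) (hσ' : StratLegal (prodArena DA DB) σ') :
    ∃ σ'' : List S → T, Executable DA DB σ'' ∧
      ∀ (ρ : ℕ → S × T) (n : ℕ),
        (IsPlay (prodArena DA DB) ρ n ∧ Compatible (prodArena DA DB) σ' ρ n) ↔
        (∃ (τ : ℕ → S) (m : ℕ), n = 2 * m ∧ IsTrace DA τ m ∧
          (∀ j, j ≤ m → ρ (2 * j) = (τ j, induced σ'' τ j)) ∧
          (∀ j, j < m → ρ (2 * j + 1) = (τ (j + 1), induced σ'' τ j))) :=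
  game_strategy_to_executable_strategy_general DA DB σ' hσ'
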